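/- For all real numbers x₁, x₂, x₃ and every z ∈ ℍ, let M be the 3×3 complex matrix whose first row is ((z − x₁)⁻², (z − x₂)⁻², (z − x₃)⁻²), whose second row is ((z̄ − x₁)⁻², (z̄ − x₂)⁻², (z̄ − x₃)⁻²) (z̄ denoting the complex conjugate of z), and whose third row is (2·Im(z)/|z − x₁|², 2·Im(z)/|z − x₂|², 2·Im(z)/|z − x₃|²) (real numbers regarded as complex numbers). Then (−i) · det M = 16 (x₂ − x₁)(x₃ − x₂)(x₃ − x₁) · Im(z)⁴ / (|z − x₁|⁴ |z − x₂|⁴ |z − x₃|⁴), as an equality of complex numbers. -/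

import Mathlib

open ComplexConjugate

/-!
Put `a_j = z - x_j`, so that `conj a_j = conj z - x_j`, `|a_j|² = a_j · conj a_j`, and
`2 Im z = -i (z - conj z)`. The third row then becomes `-i (z - conj z) · a_j⁻¹ (conj a_j)⁻¹`, so the
rows are `p², q², c·pq` with `p_j = a_j⁻¹`, `q_j = (conj a_j)⁻¹`. Such a determinant factors into the
`2 × 2` minors `p_i q_j - p_j q_i`, and each minor equals `(z - conj z)(x_j - x_i) / (|a_i|² |a_j|²)`
because `a_j - conj a_j = z - conj z` does not depend on `j`. Finally `(z - conj z)⁴ = 16 (Im z)⁴`.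
-/

theorem Matrix.det_fin_three_sq_sq_mul {R : Type*} [CommRing R] (p₁ p₂ p₃ q₁ q₂ q₃ c : R) :
    Matrix.det !![p₁ ^ 2, p₂ ^ 2, p₃ ^ 2; q₁ ^ 2, q₂ ^ 2, q₃ ^ 2;
      c * (p₁ * q₁), c * (p₂ * q₂), c * (p₃ * q₃)] =
      c * ((p₁ * q₂ - p₂ * q₁) * (p₂ * q₃ - p₃ * q₂) * (p₃ * q₁ - p₁ * q₃)) := by
  rw [Matrix.det_fin_three]
  simp only [Matrix.of_apply, Matrix.cons_val', Matrix.cons_val_zero, Matrix.cons_val_one,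
    Matrix.cons_val_two, Matrix.head_cons, Matrix.tail_cons, Matrix.empty_val',
    Matrix.cons_val_fin_one, Matrix.head_fin_const]
  ring

theorem inv_mul_inv_sub_inv_mul_inv {K : Type*} [Field K] {z w x y : K}
    (hzx : z - x ≠ 0) (hzy : z - y ≠ 0) (hwx : w - x ≠ 0) (hwy : w - y ≠ 0) :
    (z - x)⁻¹ * (w - y)⁻¹ - (z - y)⁻¹ * (w - x)⁻¹ =
      (z - w) * (y - x) / ((z - x) * (w - x) * ((z - y) * (w - y))) := by
  field_simp
  ring

namespace Complex

theorem sub_ofReal_ne_zero {z : ℂ} (hz : z.im ≠ 0) (x : ℝ) : z - x ≠ 0 :=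
  fun h => hz (by simpa using congrArg im h)

theorem ofReal_norm_sub_ofReal_sq (z : ℂ) (x : ℝ) :
    ((‖z - x‖ : ℝ) : ℂ) ^ 2 = (z - x) * (conj z - x) := by
  rw [← mul_conj', map_sub, conj_ofReal]

theorem ofReal_two_mul_im_div_norm_sub_ofReal_sq (z : ℂ) (x : ℝ) :
    ((2 * z.im / ‖z - x‖ ^ 2 : ℝ) : ℂ) = -I * (z - conj z) * ((z - x)⁻¹ * (conj z - x)⁻¹) := by
  rw [sub_conj, ← mul_inv, ← ofReal_norm_sub_ofReal_sq, ofReal_div, div_eq_mul_inv, ofReal_pow]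
  linear_combination ((2 * z.im : ℝ) * ((‖z - x‖ : ℂ) ^ 2)⁻¹) * I_sq

theorem sub_conj_pow_four (z : ℂ) : (z - conj z) ^ 4 = 16 * (z.im : ℂ) ^ 4 := by
  rw [sub_conj, mul_pow, I_pow_four]
  push_cast
  ring

end Complex

theorem det_observable_eq_tripod (x₁ x₂ x₃ : ℝ) (z : ℂ) (hz : 0 < z.im) :
    (-Complex.I) * Matrix.det
      !![((z - (x₁ : ℂ)) ^ 2)⁻¹, ((z - (x₂ : ℂ)) ^ 2)⁻¹, ((z - (x₃ : ℂ)) ^ 2)⁻¹;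
         ((conj z - (x₁ : ℂ)) ^ 2)⁻¹, ((conj z - (x₂ : ℂ)) ^ 2)⁻¹, ((conj z - (x₃ : ℂ)) ^ 2)⁻¹;
         ((2 * z.im / ‖z - (x₁ : ℂ)‖ ^ 2 : ℝ) : ℂ),
           ((2 * z.im / ‖z - (x₂ : ℂ)‖ ^ 2 : ℝ) : ℂ),
           ((2 * z.im / ‖z - (x₃ : ℂ)‖ ^ 2 : ℝ) : ℂ)] =
    ((16 * (x₂ - x₁) * (x₃ - x₂) * (x₃ - x₁) * z.im ^ 4 /
        (‖z - (x₁ : ℂ)‖ ^ 4 * ‖z - (x₂ : ℂ)‖ ^ 4 *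
          ‖z - (x₃ : ℂ)‖ ^ 4) : ℝ) : ℂ) := by
  have hz₀ : ∀ x : ℝ, z - x ≠ 0 := Complex.sub_ofReal_ne_zero hz.ne'
  have hz₁ : ∀ x : ℝ, conj z - x ≠ 0 := Complex.sub_ofReal_ne_zero (by simpa using hz.ne')
  have hnorm (x : ℝ) : ((‖z - x‖ : ℝ) : ℂ) ^ 4 = ((z - x) * (conj z - x)) ^ 2 := by
    rw [← Complex.ofReal_norm_sub_ofReal_sq, ← pow_mul]
  simp only [← inv_pow, Complex.ofReal_two_mul_im_div_norm_sub_ofReal_sq,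
    Matrix.det_fin_three_sq_sq_mul, inv_mul_inv_sub_inv_mul_inv (hz₀ _) (hz₀ _) (hz₁ _) (hz₁ _)]
  push_cast
  rw [hnorm, hnorm, hnorm]
  field_simp
  rw [Complex.I_sq, Complex.sub_conj_pow_four]
  ring
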